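/- arXiv:1309.7493 — 3 statements merged into one kernel-verified Lean document; each statement's English description precedes it below -/
import Mathlib

section
/- An element a of a general ring I is quasipolar if and only if there exists b ∈ comm²(a) with ab² = b and a²b - a ∈ QN(I). Moreover, such b is unique when it exists. -/
/-!
Pass to the unitization `Unitization ℤ I`, where `q ∈ Q(I)` means that `1 - q` is a unit. There
the double commutant of `a` is a commutative subring, closed under inverses, containing
`comm²(a)`, so every identity between `a`, `p` and `b` is checked by commutative ring arithmetic.

Given `p`, the element `b = -(1 - a - p)⁻¹ p` works, and `ab = p`. Conversely `p = ab` works,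
because `1 - a - ab = (1 - ab - a²b)(1 - (a - a²b))`, where the first factor has inverse
`1 - ab - b`. If `b` and `c` both work, then `ab(1 - ac) = (a - a²c)(b - abc)` is an idempotent
in `Q(I)`, hence zero; by symmetry `ab = ac`, and then `b = c`.
-/

variable {I : Type*} [NonUnitalRing I]

/-- quasiregular elements: p * q = 0 = q * p with p*q = p+q-pq -/
def inQ (a : I) : Prop := ∃ p : I, p + a - p * a = 0 ∧ a + p - a * p = 0

def inQN (a : I) : Prop := ∀ x : I, a * x = x * a → inQ (a * x)

def inComm2 (a x : I) : Prop := ∀ y : I, y * a = a * y → x * y = y * x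

def IsQuasipolarElem (a : I) : Prop :=
  ∃ p : I, p * p = p ∧ inComm2 a p ∧ inQ (a + p) ∧ inQN (a - a * p)

/-- pw a n = a^(n+1) -/
def pw (a : I) : ℕ → I
  | 0 => a
  | n + 1 => pw a n * a

def IsSPiReg (a : I) : Prop := ∃ n : ℕ, ∃ x : I, a * x = x * a ∧ pw a n = pw a (n + 1) * x

def IsNilp (a : I) : Prop := ∃ n : ℕ, pw a n = 0

def IsStrReg (a : I) : Prop := ∃ b : I, a * b = b * a ∧ a = a * b * a

open Unitization

section Bicommutant

variable {R : Type*} [Ring R]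

def bicommutant (a : R) : Subring R := Subring.centralizer (Set.centralizer {a})

instance (a : R) : CommRing (bicommutant a) :=
  { (bicommutant a).toRing with
    mul_comm := fun x y => Subtype.ext <|
      Set.centralizer_centralizer_comm_of_comm (S := {a}) (by simp) x.1 x.2 y.1 y.2 }

lemma bicommutant.isUnit_of_isUnit_coe {a : R} {x : bicommutant a} (hx : IsUnit (x : R)) :
    IsUnit x := by
  obtain ⟨u, hu⟩ := hx
  have hinv : (↑u⁻¹ : R) ∈ bicommutant a := fun y hy =>
    (Commute.units_inv_right (hu ▸ (x.2 y hy))).eq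
  exact IsUnit.of_mul_eq_one (⟨_, hinv⟩ : bicommutant a) (Subtype.ext (by simp [← hu]))

end Bicommutant

section CommRing

variable {S : Type*} [CommRing S]

lemma exists_mul_eq_and_mul_mul_self_eq {a p : S} (hp : IsIdempotentElem p)
    (hu : IsUnit (1 - a - p)) : ∃ b, a * b = p ∧ a * (b * b) = b := by
  obtain ⟨h, hh⟩ := hu.exists_right_inv
  refine ⟨-(h * p), ?_, ?_⟩
  · linear_combination h * hp.eq + p * hh
  · linear_combination (-(h * h * p + h)) * hp.eq + (-(h * p * p)) * hh

lemma isUnit_one_sub_add_mul {a b : S} (hb : a * (b * b) = b)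
    (hq : IsUnit (1 - (a - a * a * b))) : IsUnit (1 - (a + a * b)) := by
  have hfactor : 1 - (a + a * b) = (1 - a * b - a * a * b) * (1 - (a - a * a * b)) := by
    linear_combination (a * a + a * a * a) * hb
  have hunit : (1 - a * b - a * a * b) * (1 - a * b - b) = 1 := by
    linear_combination (1 + 2 * a + a * a) * hb
  exact hfactor ▸ (IsUnit.of_mul_eq_one _ hunit).mul hq

end CommRing

lemma Unitization.exists_inr_eq_inr_mul {R A : Type*} [CommSemiring R] [NonUnitalSemiring A]
    [Module R A] (x : A) (w : Unitization R A) : ∃ y : A, (y : Unitization R A) = x * w :=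
  ⟨(x * w : Unitization R A).snd, by ext <;> simp⟩

-- Mathlib's `IsQuasiregular` is for the circle product `x + y + xy`, hence the sign of `x`.
lemma inQ_iff_isUnit (x : I) : inQ x ↔ IsUnit (1 - (x : Unitization ℤ I)) := by
  calc inQ x ↔ IsQuasiregular (-x) := by
        rw [isQuasiregular_iff]
        constructor <;> rintro ⟨p, h₁, h₂⟩ <;> refine ⟨-p, ?_, ?_⟩ <;>
          refine neg_eq_zero.mp ?_
        · rw [← h₂]; noncomm_ring
        · rw [← h₁]; noncomm_ring
        · rw [← h₂]; noncomm_ring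
        · rw [← h₁]; noncomm_ring
    _ ↔ IsUnit (1 - (x : Unitization ℤ I)) := by
        rw [isQuasiregular_iff_isUnit' ℤ, inr_neg, ← sub_eq_add_neg]

lemma inQ.eq_zero_of_isIdempotentElem {g : I} (hg : inQ g) (hgg : IsIdempotentElem g) : g = 0 := by
  obtain ⟨w, -, hw⟩ := hg
  have h := congrArg (g * ·) hw
  simp only [mul_sub, mul_add, ← mul_assoc, hgg.eq, mul_zero] at h
  simpa using h

lemma inQN.neg {q : I} (hq : inQN q) : inQN (-q) := fun x hx => by
  simpa using hq (-x) (by simpa using hx)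

lemma inQ_of_inQN {q : I} (hq : inQN q) : inQ q := by
  have hsq := (inQ_iff_isUnit _).mp (hq q rfl)
  have hfactor : 1 - ((q * q : I) : Unitization ℤ I) = (1 - q) * (1 + q) := by
    rw [inr_mul]; noncomm_ring
  rw [hfactor] at hsq
  exact (inQ_iff_isUnit q).mpr ((Commute.isUnit_mul_iff <|
    (Commute.one_left _).sub_left ((Commute.one_right _).add_right (Commute.refl _))).mp hsq).1

lemma inComm2_self (a : I) : inComm2 a a := fun _ hy => hy.symm

lemma inComm2_iff_mem_bicommutant {a x : I} :
    inComm2 a x ↔ (x : Unitization ℤ I) ∈ bicommutant (a : Unitization ℤ I) := by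
  constructor
  · intro hx z hz
    have hsnd : z.snd * a = a * z.snd := by
      simpa using (congrArg (·.snd) (hz _ rfl)).symm
    rw [← inl_fst_add_inr_snd_eq z]
    simp [add_mul, mul_add, ← inr_mul, inl_mul_inr, inr_mul_inl, hx _ hsnd]
  · intro hx y hy
    have hy' : (y : Unitization ℤ I) ∈ Set.centralizer {(a : Unitization ℤ I)} := by
      simp [Set.mem_centralizer_iff, ← inr_mul, hy]
    exact_mod_cast (hx _ hy').symm

lemma inComm2.exists_coe_eq {a x : I} (hx : inComm2 a x) :
    ∃ X : bicommutant (a : Unitization ℤ I), (X : Unitization ℤ I) = x :=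
  ⟨⟨x, inComm2_iff_mem_bicommutant.mp hx⟩, rfl⟩

def IsGenDrazinInverse (a b : I) : Prop :=
  inComm2 a b ∧ a * (b * b) = b ∧ inQN (a * a * b - a)

lemma IsQuasipolarElem.exists_isGenDrazinInverse {a : I} (ha : IsQuasipolarElem a) :
    ∃ b, IsGenDrazinInverse a b := by
  obtain ⟨p, hp, hp₁, hQ, hQN⟩ := ha
  obtain ⟨A, hA⟩ := (inComm2_self a).exists_coe_eq
  obtain ⟨P, hP⟩ := hp₁.exists_coe_eq
  have hPP : IsIdempotentElem P := Subtype.ext (by push_cast [hP]; exact_mod_cast hp)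
  have hU : IsUnit (1 - A - P) := bicommutant.isUnit_of_isUnit_coe <| by
    push_cast [hA, hP]; simpa [sub_sub] using (inQ_iff_isUnit _).mp hQ
  obtain ⟨B, hAB, hABB⟩ := exists_mul_eq_and_mul_mul_self_eq hPP hU
  replace hAB : (a * B : Unitization ℤ I) = p := by simpa [hA, hP] using congrArg Subtype.val hAB
  replace hABB : (a * (B * B) : Unitization ℤ I) = B := by
    simpa [hA] using congrArg Subtype.val hABB
  obtain ⟨b, hb⟩ := Unitization.exists_inr_eq_inr_mul a (B * B : Unitization ℤ I)
  rw [hABB] at hb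
  refine ⟨b, inComm2_iff_mem_bicommutant.mpr (hb ▸ B.2), by exact_mod_cast hb ▸ hABB, ?_⟩
  have hab : a * b = p := by exact_mod_cast hb ▸ hAB
  rw [mul_assoc, hab, ← neg_sub]
  exact hQN.neg

namespace IsGenDrazinInverse

variable {a b c : I}

lemma isQuasipolarElem (hb : IsGenDrazinInverse a b) : IsQuasipolarElem a := by
  obtain ⟨hb₁, hb₂, hb₃⟩ := hb
  have hba : b * a = a * b := hb₁ a rfl
  refine ⟨a * b, ?_, fun y hy => ?_, ?_, ?_⟩
  · rw [mul_assoc, ← mul_assoc b, hba, mul_assoc, hb₂]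
  · exact (Commute.mul_left (Commute.symm hy) (hb₁ y hy)).eq
  · obtain ⟨A, hA⟩ := (inComm2_self a).exists_coe_eq
    obtain ⟨B, hB⟩ := hb₁.exists_coe_eq
    have hB₂ : A * (B * B) = B := Subtype.ext (by push_cast [hA, hB]; exact_mod_cast hb₂)
    have hq : inQN (a - a * a * b) := by simpa using hb₃.neg
    have hq' : IsUnit (1 - (A - A * A * B)) := bicommutant.isUnit_of_isUnit_coe <| by
      push_cast [hA, hB]
      exact_mod_cast (inQ_iff_isUnit _).mp (inQ_of_inQN hq)
    have := (isUnit_one_sub_add_mul hB₂ hq').map (bicommutant _).subtype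
    rw [inQ_iff_isUnit]
    simpa [hA, hB] using this
  · rw [← mul_assoc, ← neg_sub]
    exact hb₃.neg

lemma mul_mul_mul_eq_mul (hb : IsGenDrazinInverse a b) (hc : IsGenDrazinInverse a c) :
    a * b * (a * c) = a * b := by
  obtain ⟨hb₁, hb₂, -⟩ := hb
  obtain ⟨hc₁, hc₂, hc₃⟩ := hc
  obtain ⟨A, hA⟩ := (inComm2_self a).exists_coe_eq
  obtain ⟨B, hB⟩ := hb₁.exists_coe_eq
  obtain ⟨C, hC⟩ := hc₁.exists_coe_eq
  have hB₂ : A * (B * B) = B := Subtype.ext (by push_cast [hA, hB]; exact_mod_cast hb₂)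
  have hC₂ : A * (C * C) = C := Subtype.ext (by push_cast [hA, hC]; exact_mod_cast hc₂)
  have hfactor : (a - a * a * c) * (b - a * b * c) = a * b - a * b * (a * c) := by
    have := congrArg Subtype.val <| show (A - A * A * C) * (B - A * B * C) = A * B - A * B * (A * C)
      by linear_combination (A * A * B) * hC₂
    push_cast [hA, hB, hC] at this
    exact_mod_cast this
  have hcomm : (a - a * a * c) * (b - a * b * c) = (b - a * b * c) * (a - a * a * c) := by
    have := congrArg Subtype.val (mul_comm (A - A * A * C) (B - A * B * C))
    push_cast [hA, hB, hC] at this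
    exact_mod_cast this
  have hidem : IsIdempotentElem (a * b - a * b * (a * c)) := by
    have := congrArg Subtype.val <| show IsIdempotentElem (A * B - A * B * (A * C)) by
      rw [IsIdempotentElem]
      linear_combination (A - A * A * C) * hB₂ + (A * A * A * B * B) * hC₂
    push_cast [hA, hB, hC] at this
    exact_mod_cast this
  have hq : inQN (a - a * a * c) := by simpa using hc₃.neg
  have hQ : inQ (a * b - a * b * (a * c)) := hfactor ▸ hq _ hcomm
  exact (sub_eq_zero.mp (hQ.eq_zero_of_isIdempotentElem hidem)).symm

lemma unique (hb : IsGenDrazinInverse a b) (hc : IsGenDrazinInverse a c) : b = c := by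
  have hca : Commute c a := hc.1 a rfl
  have hp : a * b = a * c := by
    have hba : Commute b a := hb.1 a rfl
    have hcomm : Commute (a * b) (a * c) :=
      ((Commute.refl a).mul_right hca.symm).mul_left (hba.mul_right (hb.1 c hca))
    rw [← hb.mul_mul_mul_eq_mul hc, hcomm.eq, hc.mul_mul_mul_eq_mul hb]
  calc b = a * (b * b) := hb.2.1.symm
    _ = a * c * b := by rw [← mul_assoc, hp]
    _ = c * (a * b) := by rw [← hca.eq, mul_assoc]
    _ = a * (c * c) := by rw [hp, ← mul_assoc, hca.eq, mul_assoc]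
    _ = c := hc.2.1

end IsGenDrazinInverse

theorem stmt5 (a : I) :
    IsQuasipolarElem a ↔
      ∃! b : I, inComm2 a b ∧ a * (b * b) = b ∧ inQN (a * a * b - a) := by
  constructor
  · intro ha
    obtain ⟨b, hb⟩ := ha.exists_isGenDrazinInverse
    exact ⟨b, hb, fun c hc => IsGenDrazinInverse.unique hc hb⟩
  · rintro ⟨b, hb, -⟩
    exact IsGenDrazinInverse.isQuasipolarElem hb
end

section
/- If a ∈ I is strongly π-regular, then a^k is strongly regular for some k ∈ ℕ. -/
variable {I : Type*} [NonUnitalRing I]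

lemma pw_succ' (a : I) (n : ℕ) : pw a (n+1) = pw a n * a := rfl

lemma pw_add (a : I) (m n : ℕ) : pw a (m + n + 1) = pw a m * pw a n := by
  induction n with
  | zero => rfl
  | succ n ih =>
    have e : m + (n+1) + 1 = (m + n + 1) + 1 := by omega
    rw [e, pw_succ', ih, pw_succ', mul_assoc]

lemma commute_pw {a x : I} (h : Commute a x) (n : ℕ) : Commute (pw a n) x := by
  induction n with
  | zero => exact h
  | succ n ih => exact ih.mul_left h

lemma commute_pw_pw {a x : I} (h : Commute a x) (m n : ℕ) : Commute (pw a m) (pw x n) :=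
  (commute_pw (commute_pw h m).symm n).symm

lemma key_lemma {a x : I} (n : ℕ) (hc : Commute a x) (h : pw a n = pw a (n+1) * x) :
    ∀ j, pw a n = pw a (n + 1 + j) * pw x j := by
  intro j
  induction j with
  | zero => exact h
  | succ j ih =>
    have h2 : pw a (n+1+j) = pw a (n+1+j+1) * x := by
      have e : n+1+j = j + n + 1 := by omega
      have e2 : n+1+j+1 = j + (n+1) + 1 := by omega
      rw [e2, pw_add, e, pw_add, h, mul_assoc]
    have e3 : n + 1 + (j+1) = n+1+j+1 := by omega
    rw [ih, h2, e3, pw_succ' x, mul_assoc, (commute_pw (Commute.refl x) j).eq]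

theorem stmt11 (a : I) (h : IsSPiReg a) : ∃ k : ℕ, IsStrReg (pw a k) := by

  obtain ⟨n, x, hcomm, h⟩ := h
  refine ⟨n, ?_⟩
  have hc : Commute a x := hcomm
  set s := pw a n with hsdef
  set c := pw x n with hcdef
  have hs : s = s * s * c := by
    have hk := key_lemma n hc h n
    have e : n + 1 + n = n + n + 1 := by omega
    rw [e, pw_add] at hk
    exact hk
  have hsc : Commute s c := commute_pw_pw hc n n
  have hcs : c * s = s * c := hsc.symm.eq
  have h1 : s * s * c = s := hs.symm
  refine ⟨c * (c * s), (hsc.mul_right (hsc.mul_right (Commute.refl s))).eq, ?_⟩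
  calc s = (s * s) * c := hs
    _ = s * (c * s) := by rw [hcs, mul_assoc]
    _ = ((s * s) * c) * (c * s) := by rw [h1]
    _ = s * ((s * c) * c) * s := by simp only [mul_assoc]
    _ = s * ((c * s) * c) * s := by rw [hcs]
    _ = s * (c * (s * c)) * s := by rw [mul_assoc c s c]
    _ = s * (c * (c * s)) * s := by rw [hcs]
end

section
/- A general ring I is strongly π-regular (every element strongly π-regular) if and only if I is quasipolar and QN(I) ⊆ Nil(I). -/
variable {I : Type*} [NonUnitalRing I]

/-!
Work in the unitization `ℤ ⊕ I`, where `q ∈ Q(I)` means that `1 - q` is a unit. If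
`a ^ k = a ^ (k + 1) x` with `x` commuting with `a`, then `b = a ^ k x ^ (k + 1)` is a Drazin
inverse of `a`, and `e = a b` is an idempotent in the double commutant of `a` with `a - a e`
nilpotent and `1 - a - e` a unit: `a` is quasipolar. If moreover `a ∈ QN(I)`, then the idempotent
`e = a b` is quasiregular, hence `e = 0`, and `a ^ k = a ^ k e = 0`. Conversely, for a quasipolar
idempotent `p` of `a` with `a - a p` nilpotent, `a ^ m = a ^ m p` for some `m`, and
`v = (1 - a - p)⁻¹` satisfies `p = -v a p`, so `a ^ m = a ^ (m + 1) (-v p)`.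
-/

section UnitalRing

variable {R : Type*} [Ring R]

lemma pow_add_mul_pow_eq {a x : R} {k : ℕ} (h : a ^ k = a ^ (k + 1) * x) (m : ℕ) :
    a ^ (k + m) * x ^ m = a ^ k := by
  induction m with
  | zero => simp
  | succ m ih =>
    calc a ^ (k + (m + 1)) * x ^ (m + 1) = a ^ m * (a ^ (k + 1) * x) * x ^ m := by
          rw [pow_succ' x, show k + (m + 1) = m + (k + 1) by omega, pow_add]
          simp only [mul_assoc]
      _ = a ^ (k + m) * x ^ m := by rw [← h, ← pow_add, add_comm m]
      _ = a ^ k := ih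

/-- With `e = c z = z c` and `c e = c`, both `e y` and `y e` equal `e y e`. -/
lemma commute_mul_of_mul_mul_self_eq {c z y : R} (hcz : Commute c z) (hc : c * (c * z) = c)
    (hy : Commute y c) : Commute y (c * z) := by
  have hec : c * z * c = c := by rw [mul_assoc, ← hcz.eq, hc]
  have left : z * c * y * (z * c) = z * c * y := by
    calc z * c * y * (z * c) = z * (y * (c * z * c)) := by
          simp only [mul_assoc]; rw [hy.left_comm]
      _ = z * c * y := by rw [hec, hy.eq, mul_assoc]
  have right : c * z * y * (c * z) = y * (c * z) := by
    calc c * z * y * (c * z) = c * z * c * (y * z) := by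
          simp only [mul_assoc]; rw [hy.left_comm]
      _ = y * (c * z) := by rw [hec, ← mul_assoc, ← hy.eq, mul_assoc]
  rw [← hcz.eq] at left
  exact right.symm.trans left

structure IsDrazinInverse (a b : R) (k : ℕ) : Prop where
  commute : Commute a b
  mul_mul_self : b * a * b = b
  pow_succ_mul : a ^ (k + 1) * b = a ^ k

namespace IsDrazinInverse

lemma of_commute {a x : R} {k : ℕ} (hax : Commute a x) (h : a ^ k = a ^ (k + 1) * x) :
    IsDrazinInverse a (a ^ k * x ^ (k + 1)) k where
  commute := ((Commute.refl a).pow_right k).mul_right (hax.pow_right (k + 1))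
  mul_mul_self := by
    calc a ^ k * x ^ (k + 1) * a * (a ^ k * x ^ (k + 1))
        = x ^ (k + 1) * (a ^ k * a * a ^ k * x ^ (k + 1)) := by
          nth_rewrite 1 [(hax.pow_pow k (k + 1)).eq]; simp only [mul_assoc]
      _ = x ^ (k + 1) * a ^ k := by
          rw [← pow_succ, ← pow_add, show k + 1 + k = k + (k + 1) by omega,
            pow_add_mul_pow_eq h]
      _ = a ^ k * x ^ (k + 1) := (hax.pow_pow k (k + 1)).eq.symm
  pow_succ_mul := by
    rw [← mul_assoc, ← pow_add, show k + 1 + k = k + (k + 1) by omega, pow_add_mul_pow_eq h]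

variable {a b : R} {k : ℕ} (hb : IsDrazinInverse a b k)
include hb

lemma isIdempotentElem_mul : IsIdempotentElem (a * b) := by
  rw [IsIdempotentElem, mul_assoc, ← mul_assoc b, hb.mul_mul_self]

lemma pow_mul_mul : a ^ k * (a * b) = a ^ k := by
  rw [← mul_assoc, ← pow_succ, hb.pow_succ_mul]

lemma commute_mul_of_commute {y : R} (hy : Commute y a) : Commute y (a * b) := by
  have hpow : a ^ (k + 1) * b ^ (k + 1) = a * b := by
    rw [← hb.commute.mul_pow, hb.isIdempotentElem_mul.pow_succ_eq]
  rw [← hpow]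
  refine commute_mul_of_mul_mul_self_eq (hb.commute.pow_pow _ _) ?_ (hy.pow_right _)
  rw [hpow, ← mul_assoc, ← pow_succ, pow_succ', mul_assoc, hb.pow_succ_mul, ← pow_succ']

lemma isNilpotent_sub_mul_mul : IsNilpotent (a - a * (a * b)) := by
  have hcomm : Commute a (1 - a * b) :=
    (Commute.one_right a).sub_right ((Commute.refl a).mul_right hb.commute)
  refine ⟨k + 1, ?_⟩
  rw [← mul_one_sub, hcomm.mul_pow, hb.isIdempotentElem_mul.one_sub.pow_succ_eq, pow_succ',
    mul_assoc, mul_one_sub, hb.pow_mul_mul, sub_self, mul_zero]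

/-- `1 - a - e = (1 - (a - a e)) (1 - e - e a)` for the spectral idempotent `e = a b`; the first
factor is a unit by nilpotence, the second has inverse `1 - e - b`. -/
lemma isUnit_one_sub_sub_mul : IsUnit (1 - a - a * b) := by
  have he := hb.isIdempotentElem_mul
  have hea : Commute (a * b) a := ((Commute.refl a).mul_right hb.commute).symm
  have heb : a * b * b = b := by rw [hb.commute.eq, hb.mul_mul_self]
  have hbe : b * (a * b) = b := by rw [← mul_assoc, hb.mul_mul_self]
  have hba : b * a = a * b := hb.commute.eq.symm
  have hnil := hb.isNilpotent_sub_mul_mul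
  generalize hE : a * b = e at *
  have hfac : (1 - (a - a * e)) * (1 - e - e * a) = 1 - a - e := by
    calc (1 - (a - a * e)) * (1 - e - e * a)
        = 1 - a - e + (a * e - e * a) + a * (e - e * e) + a * (e - e * e) * a := by
          noncomm_ring
      _ = 1 - a - e := by rw [he.eq, hea.eq, sub_self]; simp
  have hinv : IsUnit (1 - e - e * a) := by
    refine ⟨⟨1 - e - e * a, 1 - e - b, ?_, ?_⟩, rfl⟩
    · simp only [mul_sub, sub_mul, mul_one, one_mul, mul_assoc, he.eq, he.mul_self_mul, hE, heb,
        ← hea.eq]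
      abel
    · simp only [mul_sub, sub_mul, mul_one, one_mul, he.eq, hbe, hba, ← mul_assoc]
      abel
  rw [← hfac]
  exact hnil.isUnit_one_sub.mul hinv

end IsDrazinInverse

lemma pow_eq_pow_succ_mul_neg_mul_of_isIdempotentElem {a p v : R} {m : ℕ}
    (hp : IsIdempotentElem p) (hpa : Commute p a) (hv : v * (1 - a - p) = 1) (hva : Commute v a)
    (hm : (a - a * p) ^ m = 0) : a ^ m = a ^ (m + 1) * -(v * p) := by
  have hpow : a ^ m * p = a ^ m := by
    have hcomm : Commute a (1 - p) := ((Commute.one_left a).sub_left hpa).symm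
    have h0 : a ^ m * (1 - p) ^ (m + 1) = 0 := by
      rw [pow_succ, ← mul_assoc, ← hcomm.mul_pow, mul_one_sub a p, hm, zero_mul]
    rw [hp.one_sub.pow_succ_eq, mul_one_sub, sub_eq_zero] at h0
    exact h0.symm
  have hp' : p = -(v * (a * p)) := by
    calc p = v * (1 - a - p) * p := by rw [hv, one_mul]
      _ = -(v * (a * p)) := by rw [mul_assoc, sub_mul, sub_mul, one_mul, hp.eq]; noncomm_ring
  calc a ^ m = a ^ m * -(v * (a * p)) := by rw [← hp', hpow]
    _ = a ^ m * -(a * (v * p)) := by rw [← mul_assoc, hva.eq, mul_assoc]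
    _ = a ^ (m + 1) * -(v * p) := by rw [pow_succ, mul_neg, mul_neg, mul_assoc]

end UnitalRing

open Unitization

lemma inr_pw (a : I) (n : ℕ) :
    ((pw a n : I) : Unitization ℤ I) = (a : Unitization ℤ I) ^ (n + 1) := by
  induction n with
  | zero => simp [pw]
  | succ n ih => rw [pw, inr_mul, ih, ← pow_succ]

lemma commute_inr_iff {a b : I} : Commute (a : Unitization ℤ I) b ↔ Commute a b := by
  simp only [Commute, SemiconjBy, ← inr_mul, inr_inj]

lemma inr_snd_mul_inr (y : Unitization ℤ I) (p : I) :
    (((y * p).snd : I) : Unitization ℤ I) = y * p :=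
  Unitization.ext (by simp) rfl

/-- `Q(I)` is Mathlib's quasiregularity up to the sign change `q ↦ -q`, which turns
`p + q - p q` into `p + q + p q`. -/
lemma inQ_iff_isQuasiregular_neg (a : I) : inQ a ↔ IsQuasiregular (-a) := by
  rw [isQuasiregular_iff]
  constructor
  · rintro ⟨p, h₁, h₂⟩
    exact ⟨-p, by rw [← neg_eq_zero, ← h₂]; noncomm_ring,
      by rw [← neg_eq_zero, ← h₁]; noncomm_ring⟩
  · rintro ⟨y, h₁, h₂⟩
    exact ⟨-y, by rw [← neg_eq_zero, ← h₂]; noncomm_ring,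
      by rw [← neg_eq_zero, ← h₁]; noncomm_ring⟩

lemma inQ_iff_isUnit_one_sub (a : I) : inQ a ↔ IsUnit (1 - (a : Unitization ℤ I)) := by
  rw [inQ_iff_isQuasiregular_neg, isQuasiregular_iff_isUnit' ℤ, inr_neg, sub_eq_add_neg]

lemma isNilp_iff_isNilpotent_inr (a : I) : IsNilp a ↔ IsNilpotent (a : Unitization ℤ I) := by
  constructor
  · rintro ⟨n, hn⟩
    exact ⟨n + 1, by rw [← inr_pw, hn, inr_zero]⟩
  · rintro ⟨_ | n, hn⟩
    · simpa using congrArg (·.fst) hn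
    · exact ⟨n, inr_injective (R := ℤ) (by rw [inr_pw, hn, inr_zero])⟩

lemma inQN_of_isNilp {a : I} (h : IsNilp a) : inQN a := by
  intro x hx
  rw [isNilp_iff_isNilpotent_inr] at h
  rw [inQ_iff_isUnit_one_sub, inr_mul]
  have hax : IsNilpotent ((a : Unitization ℤ I) * x) :=
    Commute.isNilpotent_mul_right (R := Unitization ℤ I) (commute_inr_iff.mpr hx) h
  exact IsNilpotent.isUnit_one_sub (R := Unitization ℤ I) hax

namespace IsSPiReg

lemma exists_isDrazinInverse {a : I} (h : IsSPiReg a) :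
    ∃ (b : I) (k : ℕ), IsDrazinInverse (a : Unitization ℤ I) b k := by
  obtain ⟨n, x, hax, hx⟩ := h
  refine ⟨pw a n * pw x (n + 1), n + 1, ?_⟩
  have hpow : (a : Unitization ℤ I) ^ (n + 1) = (a : Unitization ℤ I) ^ (n + 1 + 1) * x := by
    simpa only [inr_pw, inr_mul] using congrArg ((↑) : I → Unitization ℤ I) hx
  simpa only [inr_mul, inr_pw] using
    IsDrazinInverse.of_commute (commute_inr_iff.mpr hax) hpow

lemma isQuasipolarElem {a : I} (h : IsSPiReg a) : IsQuasipolarElem a := by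
  obtain ⟨b, k, hb⟩ := h.exists_isDrazinInverse
  refine ⟨a * b, ?_, fun y hy ↦ ?_, ?_, inQN_of_isNilp ?_⟩
  · exact inr_injective (R := ℤ) (by simpa using hb.isIdempotentElem_mul.eq)
  · have hy' := hb.commute_mul_of_commute (y := (y : Unitization ℤ I)) (commute_inr_iff.mpr hy)
    rw [← inr_mul, commute_inr_iff] at hy'
    exact hy'.symm
  · rw [inQ_iff_isUnit_one_sub, inr_add, inr_mul, ← sub_sub]
    exact hb.isUnit_one_sub_sub_mul
  · simpa [isNilp_iff_isNilpotent_inr] using hb.isNilpotent_sub_mul_mul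

lemma isNilp_of_inQN {q : I} (h : IsSPiReg q) (hq : inQN q) : IsNilp q := by
  obtain ⟨b, k, hb⟩ := h.exists_isDrazinInverse
  have hu : IsUnit (1 - (q : Unitization ℤ I) * b) := by
    simpa [inQ_iff_isUnit_one_sub] using hq b (commute_inr_iff.mp hb.commute)
  have he : (q : Unitization ℤ I) * b = 0 :=
    (IsUnit.mul_left_eq_zero (M₀ := Unitization ℤ I) hu).mp
      hb.isIdempotentElem_mul.mul_one_sub_self
  rw [isNilp_iff_isNilpotent_inr]
  exact ⟨k, by rw [← hb.pow_mul_mul, he, mul_zero]⟩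

lemma of_idempotent_of_isNilp {a p : I} (hp : p * p = p) (hpa : p * a = a * p) (hQ : inQ (a + p))
    (hnil : IsNilp (a - a * p)) : IsSPiReg a := by
  obtain ⟨u, hu⟩ := (inQ_iff_isUnit_one_sub _).mp hQ
  rw [inr_add, ← sub_sub] at hu
  obtain ⟨m, hm⟩ := (isNilp_iff_isNilpotent_inr _).mp hnil
  have hpa' := commute_inr_iff.mpr hpa
  have hva : Commute (↑u⁻¹ : Unitization ℤ I) a :=
    (hu ▸ ((Commute.one_left _).sub_left (Commute.refl _)).sub_left hpa').units_inv_left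
  have hp' : IsIdempotentElem (p : Unitization ℤ I) := by
    rw [IsIdempotentElem, ← inr_mul, hp]
  have hm' : ((a : Unitization ℤ I) - a * p) ^ (m + 1) = 0 := by
    rw [← inr_mul, ← inr_sub]
    exact pow_eq_zero_of_le (M₀ := Unitization ℤ I) m.le_succ hm
  have hv : (↑u⁻¹ : Unitization ℤ I) * (1 - a - p) = 1 := by rw [← hu, u.inv_mul]
  have hpow := pow_eq_pow_succ_mul_neg_mul_of_isIdempotentElem (R := Unitization ℤ I) hp' hpa'
    hv hva hm'
  refine ⟨m, -(↑u⁻¹ * (p : Unitization ℤ I)).snd, ?_, ?_⟩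
  · show Commute _ _
    rw [← commute_inr_iff, inr_neg, inr_snd_mul_inr]
    have hvp : Commute ((↑u⁻¹ : Unitization ℤ I) * p) a :=
      Commute.mul_left (S := Unitization ℤ I) hva hpa'
    exact hvp.symm.neg_right
  · apply inr_injective (R := ℤ)
    rw [inr_mul, inr_neg, inr_snd_mul_inr, inr_pw, inr_pw]
    exact hpow

end IsSPiReg

theorem stmt15 :
    (∀ a : I, IsSPiReg a) ↔
      (∀ a : I, IsQuasipolarElem a) ∧ (∀ q : I, inQN q → IsNilp q) := by
  refine ⟨fun h ↦ ⟨fun a ↦ (h a).isQuasipolarElem, fun q ↦ (h q).isNilp_of_inQN⟩, ?_⟩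
  rintro ⟨hqp, hnil⟩ a
  obtain ⟨p, hp, hcomm, hQ, hQN⟩ := hqp a
  exact IsSPiReg.of_idempotent_of_isNilp hp (hcomm a rfl) hQ (hnil _ hQN)
end
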